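/- Let n ≥ 1 and j ≥ 1, and let k ∈ {2j, 2j+1}. The one-step transition kernel of the gossip k-Majority process is stochastically monotone in the state: for all states s, s' ∈ {0,…,n} with s > s' and every d ∈ {0,…,n}, P(X_{t+1} ≥ d | X_t = s) ≥ P(X_{t+1} ≥ d | X_t = s'). -/

import Mathlib

open MeasureTheory Finset
open scoped ENNReal NNReal

noncomputable section

/-- Probability mass function of a binomial random variable `Bin(m, p)` at `k`. -/
def binomPMF (m k : ℕ) (p : ℝ) : ℝ := (m.choose k : ℝ) * p ^ k * (1 - p) ^ (m - k)

/-- Tail probability `P(Bin(m, p) ≥ j)`. -/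
def binomTail (m j : ℕ) (p : ℝ) : ℝ := ∑ k ∈ Finset.Icc j m, binomPMF m k p

/-- Cumulative distribution function `P(Bin(m, p) ≤ j)`. -/
def binomCDF (m j : ℕ) (p : ℝ) : ℝ := ∑ k ∈ Finset.range (j + 1), binomPMF m k p

/-- `majProb n j s` is the sample-majority probability `q_j(s)`: the probability that an
agent sampling `j` agents uniformly at random with replacement (when `s` of the `n` agents
hold opinion `a`) adopts opinion `a` under majority with uniform tie-breaking.
For odd `j = 2m+1` this is `P(Bin(2m+1, s/n) ≥ m+1)`; for even `j = 2m` it is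
`P(Bin(2m, s/n) ≥ m+1) + (1/2)·P(Bin(2m, s/n) = m)`. -/
def majProb (n j s : ℕ) : ℝ :=
  binomTail j (j / 2 + 1) ((s : ℝ) / n) +
    if Even j then (1 / 2) * binomPMF j (j / 2) ((s : ℝ) / n) else 0

/-- One-step transition kernel of the sequential `j`-Majority process on states `{0, …, n}`:
from state `s`, move to `s+1` with probability `((n-s)/n)·q_j(s)`, to `s-1` with probability
`(s/n)·(1-q_j(s))`, and stay at `s` otherwise. -/
def seqKernel (n j : ℕ) (s u : ℕ) : ℝ :=
  if u = s + 1 then (((n : ℝ) - s) / n) * majProb n j s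
  else if u + 1 = s then ((s : ℝ) / n) * (1 - majProb n j s)
  else if u = s then
    1 - (((n : ℝ) - s) / n) * majProb n j s - ((s : ℝ) / n) * (1 - majProb n j s)
  else 0

/-- One-step transition kernel of the gossip `j`-Majority process on states `{0, …, n}`:
from state `s`, the next state is distributed as `Bin(n, q_j(s))`. -/
def gossipKernel (n j : ℕ) (s u : ℕ) : ℝ := binomPMF n u (majProb n j s)

/-- `kernelTail K n s d` is the mass that the kernel `K` places, from state `s`,
on the set `{d, d+1, …, n}`, i.e. `P(X_{t+1} ≥ d | X_t = s)`. -/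
def kernelTail (K : ℕ → ℕ → ℝ) (n s d : ℕ) : ℝ := ∑ u ∈ Finset.Icc d n, K s u

/-- `IsMarkovChain μ K x X` states that, under the probability measure `μ`, the process
`X` is a Markov chain with one-step transition kernel `K` started at `x`: `X 0 = x`
almost surely, and conditionally on any finite path the next state is distributed
according to `K` applied to the current state. -/
def IsMarkovChain {Ω : Type*} [MeasurableSpace Ω] (μ : Measure Ω)
    (K : ℕ → ℕ → ℝ) (x : ℕ) (X : ℕ → Ω → ℕ) : Prop :=
  IsProbabilityMeasure μ ∧
  (∀ t, Measurable (X t)) ∧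
  μ {ω | X 0 ω = x} = 1 ∧
  ∀ (t : ℕ) (p : ℕ → ℕ) (u : ℕ),
    μ ({ω | X (t + 1) ω = u} ∩ {ω | ∀ i ≤ t, X i ω = p i}) =
      ENNReal.ofReal (K (p t) u) * μ {ω | ∀ i ≤ t, X i ω = p i}

/-- The convergence (hitting) time: the first time `t` with `X t ∈ {0, n}`
(`⊤` if the process never reaches a consensus state). -/
def hitTime {Ω : Type*} (n : ℕ) (X : ℕ → Ω → ℕ) (ω : Ω) : ℕ∞ :=
  ⨅ (t : ℕ) (_ : X t ω = 0 ∨ X t ω = n), (t : ℕ∞)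

/-! The next state from `s` is `Bin(n, q_k(s))`, so the tail `P(X_{t+1} ≥ d | X_t = s)` is a
binomial tail evaluated at the success probability `q_k(s)`. Binomial tails increase with the
success probability: by Pascal's rule `P(Bin(m+1, p) ≥ j+1)` mixes `P(Bin(m, p) ≥ j)` and the
smaller `P(Bin(m, p) ≥ j+1)` with weights `p` and `1 - p`, so induction on `m` applies. And
`q_k(s)` increases with `s`: for odd `k` it is a binomial tail at `s/n`, for even `k` the average
of two. -/

lemma binomPMF_nonneg (m k : ℕ) {p : ℝ} (hp : p ∈ Set.Icc (0 : ℝ) 1) : 0 ≤ binomPMF m k p := by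
  have hp0 : 0 ≤ p := hp.1
  have hq0 : 0 ≤ 1 - p := sub_nonneg.mpr hp.2
  unfold binomPMF
  positivity

lemma binomPMF_eq_zero_of_lt {m k : ℕ} (h : m < k) (p : ℝ) : binomPMF m k p = 0 := by
  simp [binomPMF, Nat.choose_eq_zero_of_lt h]

lemma binomPMF_succ_succ (m k : ℕ) (p : ℝ) :
    binomPMF (m + 1) (k + 1) p = p * binomPMF m k p + (1 - p) * binomPMF m (k + 1) p := by
  rcases lt_or_ge k m with hkm | hmk
  · have hexp : m - k = m - (k + 1) + 1 := by omega
    simp only [binomPMF, Nat.choose_succ_succ, Nat.cast_add, Nat.add_sub_add_right, hexp]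
    ring
  · rw [binomPMF_eq_zero_of_lt (by omega : m < k + 1)]
    simp only [binomPMF, Nat.choose_succ_succ, Nat.choose_eq_zero_of_lt (by omega : m < k + 1),
      Nat.add_sub_add_right, add_zero]
    ring

lemma binomTail_eq_sum_Icc_succ (m j : ℕ) (p : ℝ) :
    binomTail m j p = ∑ k ∈ Icc j (m + 1), binomPMF m k p :=
  sum_subset (Icc_subset_Icc_right m.le_succ) fun k hk hkm =>
    binomPMF_eq_zero_of_lt (by simp only [mem_Icc] at hk hkm; omega) p

lemma binomTail_zero (m : ℕ) (p : ℝ) : binomTail m 0 p = 1 := by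
  have h := add_pow p (1 - p) m
  rw [add_sub_cancel, one_pow, Nat.range_succ_eq_Icc_zero] at h
  rw [binomTail, h]
  exact sum_congr rfl fun k _ => by rw [binomPMF]; ring

lemma binomTail_succ_succ (m j : ℕ) (p : ℝ) :
    binomTail (m + 1) (j + 1) p = p * binomTail m j p + (1 - p) * binomTail m (j + 1) p := by
  rw [binomTail, ← map_add_right_Icc, sum_map, binomTail_eq_sum_Icc_succ m (j + 1),
    ← map_add_right_Icc, sum_map, binomTail, mul_sum, mul_sum, ← sum_add_distrib]
  exact sum_congr rfl fun k _ => binomPMF_succ_succ m k p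

lemma binomPMF_eq_binomTail_sub {m k : ℕ} (hk : k ≤ m) (p : ℝ) :
    binomPMF m k p = binomTail m k p - binomTail m (k + 1) p := by
  rw [binomTail, Icc_eq_cons_Ioc hk, sum_cons, ← Icc_add_one_left_eq_Ioc, binomTail,
    add_sub_cancel_right]

lemma binomTail_antitone (m : ℕ) {p : ℝ} (hp : p ∈ Set.Icc (0 : ℝ) 1) :
    Antitone fun j => binomTail m j p := fun _ _ hij =>
  sum_le_sum_of_subset_of_nonneg (Icc_subset_Icc_left hij) fun k _ _ => binomPMF_nonneg m k hp

lemma binomTail_nonneg (m j : ℕ) {p : ℝ} (hp : p ∈ Set.Icc (0 : ℝ) 1) : 0 ≤ binomTail m j p :=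
  sum_nonneg fun k _ => binomPMF_nonneg m k hp

lemma binomTail_le_one (m j : ℕ) {p : ℝ} (hp : p ∈ Set.Icc (0 : ℝ) 1) : binomTail m j p ≤ 1 :=
  (binomTail_antitone m hp j.zero_le).trans_eq (binomTail_zero m p)

lemma binomTail_monotoneOn (m j : ℕ) : MonotoneOn (binomTail m j) (Set.Icc 0 1) := by
  intro p hp q hq hpq
  induction m generalizing j with
  | zero =>
    rcases j with _ | j
    · rw [binomTail_zero, binomTail_zero]
    · simp [binomTail]
  | succ m ih =>
    rcases j with _ | j
    · rw [binomTail_zero, binomTail_zero]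
    have hanti : binomTail m (j + 1) p ≤ binomTail m j p := binomTail_antitone m hp j.le_succ
    rw [binomTail_succ_succ, binomTail_succ_succ]
    calc p * binomTail m j p + (1 - p) * binomTail m (j + 1) p
        ≤ q * binomTail m j p + (1 - q) * binomTail m (j + 1) p := by
          linarith [mul_nonneg (sub_nonneg.mpr hpq) (sub_nonneg.mpr hanti)]
      _ ≤ q * binomTail m j q + (1 - q) * binomTail m (j + 1) q :=
        add_le_add (mul_le_mul_of_nonneg_left (ih j) hq.1)
          (mul_le_mul_of_nonneg_left (ih (j + 1)) (sub_nonneg.mpr hq.2))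

lemma natCast_div_mem_Icc {s n : ℕ} (hs : s ≤ n) : (s : ℝ) / n ∈ Set.Icc (0 : ℝ) 1 :=
  ⟨by positivity, div_le_one_of_le₀ (by exact_mod_cast hs) n.cast_nonneg⟩

lemma majProb_of_even {k : ℕ} (hk : Even k) (n s : ℕ) :
    majProb n k s = (binomTail k (k / 2) (s / n) + binomTail k (k / 2 + 1) (s / n)) / 2 := by
  rw [majProb, if_pos hk, binomPMF_eq_binomTail_sub (Nat.div_le_self k 2)]
  ring

lemma majProb_of_not_even {k : ℕ} (hk : ¬Even k) (n s : ℕ) :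
    majProb n k s = binomTail k (k / 2 + 1) (s / n) := by
  rw [majProb, if_neg hk, add_zero]

lemma majProb_mem_Icc {n s : ℕ} (k : ℕ) (hs : s ≤ n) : majProb n k s ∈ Set.Icc (0 : ℝ) 1 := by
  have hp := natCast_div_mem_Icc hs
  by_cases hk : Even k
  · rw [majProb_of_even hk]
    constructor
    · linarith [binomTail_nonneg k (k / 2) hp, binomTail_nonneg k (k / 2 + 1) hp]
    · linarith [binomTail_le_one k (k / 2) hp, binomTail_le_one k (k / 2 + 1) hp]
  · rw [majProb_of_not_even hk]
    exact ⟨binomTail_nonneg _ _ hp, binomTail_le_one _ _ hp⟩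

lemma majProb_mono {n s s' : ℕ} (k : ℕ) (hs : s ≤ n) (hss : s' ≤ s) :
    majProb n k s' ≤ majProb n k s := by
  have hp := natCast_div_mem_Icc hs
  have hp' := natCast_div_mem_Icc (hss.trans hs)
  have hle : (s' : ℝ) / n ≤ s / n := by gcongr
  have hmono (j : ℕ) := binomTail_monotoneOn k j hp' hp hle
  by_cases hk : Even k
  · rw [majProb_of_even hk, majProb_of_even hk]
    linarith [hmono (k / 2), hmono (k / 2 + 1)]
  · rw [majProb_of_not_even hk, majProb_of_not_even hk]
    exact hmono _

lemma kernelTail_gossipKernel (n k s d : ℕ) :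
    kernelTail (gossipKernel n k) n s d = binomTail n d (majProb n k s) := rfl

theorem stmt12_general (n k : ℕ) (s s' d : ℕ)
    (hs : s ≤ n) (hss : s' < s) :
    kernelTail (gossipKernel n k) n s' d ≤ kernelTail (gossipKernel n k) n s d := by
  rw [kernelTail_gossipKernel, kernelTail_gossipKernel]
  exact binomTail_monotoneOn n d (majProb_mem_Icc k (hss.le.trans hs)) (majProb_mem_Icc k hs)
    (majProb_mono k hs hss.le)

theorem stmt12 (n j k : ℕ) (hn : 1 ≤ n) (hj : 1 ≤ j)
    (hk : k = 2 * j ∨ k = 2 * j + 1) (s s' d : ℕ)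
    (hs : s ≤ n) (hs' : s' ≤ n) (hss : s' < s) (hd : d ≤ n) :
    kernelTail (gossipKernel n k) n s' d ≤ kernelTail (gossipKernel n k) n s d :=
  stmt12_general n k s s' d hs hss
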